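/- Let (G, g_+, g_−) and (H, h_+, h_−) be graphs each with two chosen distinct vertices. Let X be the graph obtained from the disjoint union of G and H by identifying g_+ with h_+ and g_− with h_− (identifying any resulting double edge between the gluing points to a single edge), and let Y be obtained similarly but identifying g_+ with h_− and g_− with h_+. Suppose the two gluing points are adjacent in X (equivalently, g_+ is adjacent to g_− in G or h_+ is adjacent to h_− in H). Then |X|(q) = |Y|(q) in ℚ(q). -/

import Mathlib

open scoped Classical in
/-- `q ^ d` for an extended natural number `d`, with the convention `q ^ ∞ = 0`. -/
noncomputable def qExp (d : ℕ∞) : RatFunc ℚ :=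
  if d = ⊤ then 0 else RatFunc.X ^ d.toNat

/-- The matrix `Z_G(q)` whose `(x, y)` entry is `q ^ d(x, y)`. -/
noncomputable def magMatrix {V : Type*} [Fintype V] (G : SimpleGraph V) :
    Matrix V V (RatFunc ℚ) :=
  Matrix.of fun x y => qExp (G.edist x y)

/-- The magnitude of a graph: the sum of all entries of `Z_G(q)⁻¹`. -/
noncomputable def magnitude {V : Type*} [Fintype V] [DecidableEq V] (G : SimpleGraph V) :
    RatFunc ℚ :=
  ∑ x, ∑ y, (magMatrix G)⁻¹ x y

/-- The weighting of a graph: `w_G x` is the `x`-th row sum of `Z_G(q)⁻¹`. -/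
noncomputable def weighting {V : Type*} [Fintype V] [DecidableEq V] (G : SimpleGraph V)
    (x : V) : RatFunc ℚ :=
  ∑ y, (magMatrix G)⁻¹ x y
/-- The graph obtained from the disjoint union of `G` and `H` by identifying the pair
`(gp, gm)` of vertices of `G` with the pair `(hp, hm)` of vertices of `H` (identifying
any resulting double edge between the points of identification). The vertices `Sum.inl gp`
and `Sum.inl gm` are the identified (gluing) vertices. -/
def twoPointGlue {V W : Type*} (G : SimpleGraph V) (gp gm : V)
    (H : SimpleGraph W) (hp hm : W) :
    SimpleGraph (V ⊕ {w : W // w ≠ hp ∧ w ≠ hm}) :=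
  SimpleGraph.fromRel fun x y =>
    match x, y with
    | Sum.inl a, Sum.inl b => G.Adj a b ∨ (a = gp ∧ b = gm ∧ H.Adj hp hm)
    | Sum.inl a, Sum.inr b => (a = gp ∧ H.Adj hp b.1) ∨ (a = gm ∧ H.Adj hm b.1)
    | Sum.inr a, Sum.inr b => H.Adj a.1 b.1
    | Sum.inr _, Sum.inl _ => False

namespace WhitneyAux

open SimpleGraph Sum

/-! ### qExp basics -/

lemma qExp_top : qExp ⊤ = 0 := by simp [qExp]
lemma qExp_coe (n : ℕ) : qExp n = RatFunc.X ^ n := by simp [qExp]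

lemma qExp_add (d e : ℕ∞) : qExp (d + e) = qExp d * qExp e := by
  induction d using ENat.recTopCoe with
  | top => simp [qExp_top, top_add]
  | coe d =>
    induction e using ENat.recTopCoe with
    | top => simp [qExp_top, add_top]
    | coe e => rw [← Nat.cast_add, qExp_coe, qExp_coe, qExp_coe, pow_add]

lemma qExp_zero : qExp 0 = 1 := by simpa using qExp_coe 0
lemma qExp_one : qExp 1 = RatFunc.X := by simpa using qExp_coe 1

lemma qExp_add_one (d : ℕ∞) : qExp (d + 1) = qExp d * RatFunc.X := by
  rw [qExp_add, qExp_one]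

/-! ### invertibility of the magnitude matrix -/

open Polynomial in
lemma magMatrix_det_ne_zero {V : Type*} [Fintype V] [DecidableEq V] (G : SimpleGraph V) :
    (magMatrix G).det ≠ 0 := by
  classical
  set Zp : Matrix V V ℚ[X] :=
    Matrix.of (fun x y => if G.edist x y = ⊤ then 0 else Polynomial.X ^ (G.edist x y).toNat)
    with hZp
  have hmap : (Zp.map (algebraMap ℚ[X] (RatFunc ℚ))) = magMatrix G := by
    ext x y
    simp only [Matrix.map_apply, hZp, Matrix.of_apply, magMatrix, qExp]
    split_ifs with h
    · simp
    · simp [RatFunc.algebraMap_X]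
  have heval : Polynomial.eval 0 Zp.det = 1 := by
    have h1 : Zp.map (Polynomial.evalRingHom (0:ℚ)) = 1 := by
      ext x y
      simp only [Matrix.map_apply, hZp, Matrix.of_apply, Matrix.one_apply]
      by_cases hxy : x = y
      · subst hxy; simp [SimpleGraph.edist_self]
      · have h0 : G.edist x y ≠ 0 := by
          simp [SimpleGraph.edist_eq_zero_iff, hxy]
        split_ifs with h
        · simp
        · have : (G.edist x y).toNat ≠ 0 := by
            intro hc
            apply h0
            have := ENat.coe_toNat h
            rw [← this, hc]; rfl
          simp [zero_pow this]
    have h2 := RingHom.map_det (Polynomial.evalRingHom (0:ℚ)) Zp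
    rw [RingHom.mapMatrix_apply, h1, Matrix.det_one] at h2
    simpa using h2
  have hdet : Zp.det ≠ 0 := by
    intro hc; rw [hc] at heval; simp at heval
  have h3 := RingHom.map_det (algebraMap ℚ[X] (RatFunc ℚ)) Zp
  rw [RingHom.mapMatrix_apply, hmap] at h3
  rw [← h3]
  intro hc
  apply hdet
  exact (map_eq_zero_iff _ (IsFractionRing.injective ℚ[X] (RatFunc ℚ))).mp hc

lemma magMatrix_mul_inv {V : Type*} [Fintype V] [DecidableEq V] (G : SimpleGraph V) :
    magMatrix G * (magMatrix G)⁻¹ = 1 :=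
  Matrix.mul_nonsing_inv _ (isUnit_iff_ne_zero.mpr (magMatrix_det_ne_zero G))

/-! ### general edist tools -/

lemma edist_map_le {α β : Type*} {Ga : SimpleGraph α} {Gb : SimpleGraph β} (f : α → β)
    (hf : ∀ a b, Ga.Adj a b → Gb.Adj (f a) (f b)) (a b : α) :
    Gb.edist (f a) (f b) ≤ Ga.edist a b := by
  rcases eq_or_ne (Ga.edist a b) ⊤ with h | h
  · exact h ▸ le_top
  · obtain ⟨p, hp⟩ := Ga.exists_walk_of_edist_ne_top h
    calc Gb.edist (f a) (f b) ≤ (p.map ⟨f, hf _ _⟩).length := edist_le _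
    _ = p.length := by rw [SimpleGraph.Walk.length_map]
    _ = Ga.edist a b := hp

lemma adj_step {α : Type*} {Γ : SimpleGraph α} {a b : α} (h : Γ.Adj a b) (c : α) :
    Γ.edist a c ≤ Γ.edist b c + 1 := by
  calc Γ.edist a c ≤ Γ.edist a b + Γ.edist b c := Γ.edist_triangle
  _ ≤ 1 + Γ.edist b c := by
      gcongr
      exact (edist_eq_one_iff_adj.mpr h).le
  _ = Γ.edist b c + 1 := add_comm _ _

lemma le_edist_of_lipschitz {α : Type*} {Γ : SimpleGraph α} (D : α → α → ℕ∞)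
    (hrefl : ∀ x, D x x = 0)
    (hstep : ∀ x z y, Γ.Adj x z → D x y ≤ D z y + 1) (x y : α) :
    D x y ≤ Γ.edist x y := by
  rcases eq_or_ne (Γ.edist x y) ⊤ with h | h
  · exact h ▸ le_top
  · obtain ⟨p, hp⟩ := Γ.exists_walk_of_edist_ne_top h
    rw [← hp]
    clear hp h
    induction p with
    | nil => simp [hrefl]
    | cons h p ih =>
      rename_i u v w
      calc D u w ≤ D v w + 1 := hstep _ _ _ h
      _ ≤ (p.length : ℕ∞) + 1 := by gcongr
      _ = ((p.length + 1 : ℕ) : ℕ∞) := by push_cast; ring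
      _ = _ := by simp [SimpleGraph.Walk.length_cons]

lemma min_step {s t s' t' P M : ℕ∞} (h1 : s ≤ s' + 1) (h2 : t ≤ t' + 1) :
    min (s + P) (t + M) ≤ min (s' + P) (t' + M) + 1 := by
  rw [← min_add_add_right]
  refine min_le_min ?_ ?_
  · calc s + P ≤ (s' + 1) + P := by gcongr
    _ = (s' + P) + 1 := by ring
  · calc t + M ≤ (t' + 1) + M := by gcongr
    _ = (t' + M) + 1 := by ring

lemma min_step' {s t P M P' M' : ℕ∞} (h1 : P ≤ P' + 1) (h2 : M ≤ M' + 1) :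
    min (s + P) (t + M) ≤ min (s + P') (t + M') + 1 := by
  rw [← min_add_add_right]
  refine min_le_min ?_ ?_
  · calc s + P ≤ s + (P' + 1) := by gcongr
    _ = (s + P') + 1 := by ring
  · calc t + M ≤ t + (M' + 1) := by gcongr
    _ = (t + M') + 1 := by ring

/-! ### the glued graph -/

section Glue

variable {V W : Type*} (G : SimpleGraph V) (gp gm : V) (H : SimpleGraph W) (hp hm : W)

def Gplus : SimpleGraph V := G ⊔ SimpleGraph.fromEdgeSet {s(gp, gm)}
def Hplus : SimpleGraph W := H ⊔ SimpleGraph.fromEdgeSet {s(hp, hm)}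

open scoped Classical in
noncomputable def iotaH (w : W) : V ⊕ {w : W // w ≠ hp ∧ w ≠ hm} :=
  if h1 : w = hp then inl gp else if h2 : w = hm then inl gm else inr ⟨w, h1, h2⟩

noncomputable def Dfun :
    (V ⊕ {w : W // w ≠ hp ∧ w ≠ hm}) → (V ⊕ {w : W // w ≠ hp ∧ w ≠ hm}) → ℕ∞
  | inl a, inl a' => (Gplus G gp gm).edist a a'
  | inl a, inr b => min ((Gplus G gp gm).edist a gp + (Hplus H hp hm).edist hp b.1)
      ((Gplus G gp gm).edist a gm + (Hplus H hp hm).edist hm b.1)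
  | inr b, inl a => min ((Gplus G gp gm).edist a gp + (Hplus H hp hm).edist hp b.1)
      ((Gplus G gp gm).edist a gm + (Hplus H hp hm).edist hm b.1)
  | inr b, inr b' => (Hplus H hp hm).edist b.1 b'.1

lemma iotaH_hp : iotaH gp gm hp hm hp = inl gp := by simp [iotaH]
lemma iotaH_hm (hh : hp ≠ hm) : iotaH gp gm hp hm hm = inl gm := by
  simp [iotaH, Ne.symm hh]
lemma iotaH_int {w : W} (h1 : w ≠ hp) (h2 : w ≠ hm) :
    iotaH gp gm hp hm w = inr ⟨w, h1, h2⟩ := by simp [iotaH, h1, h2]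

variable (hg : gp ≠ gm) (hh : hp ≠ hm) (hadj : G.Adj gp gm ∨ H.Adj hp hm)

include hg in
lemma Gplus_adj_pts : (Gplus G gp gm).Adj gp gm := by
  right; simp [fromEdgeSet_adj, hg]

include hh in
lemma Hplus_adj_pts : (Hplus H hp hm).Adj hp hm := by
  right; simp [fromEdgeSet_adj, hh]

lemma H_le_Hplus {w w' : W} (h : H.Adj w w') : (Hplus H hp hm).Adj w w' := Or.inl h

lemma Hplus_adj_interior {w w' : W} (h : (Hplus H hp hm).Adj w w')
    (hw' : w' ≠ hp ∧ w' ≠ hm) : H.Adj w w' := by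
  rcases h with h | h
  · exact h
  · exfalso
    simp only [fromEdgeSet_adj, Set.mem_singleton_iff, Sym2.eq, Sym2.rel_iff', Prod.mk.injEq,
      Prod.swap_prod_mk] at h
    rcases h.1 with ⟨_, h2⟩ | ⟨_, h2⟩
    · exact hw'.2 h2
    · exact hw'.1 h2

local notation "X" => twoPointGlue G gp gm H hp hm

lemma adj_inl_inr {a : V} {b : {w : W // w ≠ hp ∧ w ≠ hm}} :
    (X).Adj (inl a) (inr b) ↔ (a = gp ∧ H.Adj hp b.1) ∨ (a = gm ∧ H.Adj hm b.1) := by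
  simp only [twoPointGlue, fromRel_adj]
  constructor
  · rintro ⟨-, h | h⟩
    · exact h
    · exact h.elim
  · intro h
    exact ⟨by simp, Or.inl h⟩

lemma adj_inr_inr {b b' : {w : W // w ≠ hp ∧ w ≠ hm}} :
    (X).Adj (inr b) (inr b') ↔ H.Adj b.1 b'.1 := by
  simp only [twoPointGlue, fromRel_adj]
  constructor
  · rintro ⟨-, h | h⟩
    · exact h
    · exact h.symm
  · intro h
    refine ⟨fun hc => ?_, Or.inl h⟩
    exact h.ne (congrArg Subtype.val (inr_injective hc))

include hadj in
lemma adj_inl_inl {a a' : V} :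
    (X).Adj (inl a) (inl a') ↔ (Gplus G gp gm).Adj a a' := by
  simp only [twoPointGlue, fromRel_adj]
  constructor
  · rintro ⟨hne, h | h⟩
    · rcases h with h | ⟨h1, h2, h3⟩
      · exact Or.inl h
      · subst h1; subst h2; right
        simp only [fromEdgeSet_adj, Set.mem_singleton_iff]
        refine ⟨?_, fun hc => hne (congrArg inl hc)⟩
        simp
    · rcases h with h | ⟨h1, h2, h3⟩
      · exact Or.inl h.symm
      · subst h1; subst h2; right
        simp only [fromEdgeSet_adj, Set.mem_singleton_iff]
        refine ⟨?_, fun hc => hne (congrArg inl hc)⟩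
        simp [Sym2.eq_swap]
  · intro h
    have hne : a ≠ a' := h.ne
    refine ⟨fun hc => hne (inl_injective hc), ?_⟩
    rcases h with h | h
    · exact Or.inl (Or.inl h)
    · simp only [fromEdgeSet_adj, Set.mem_singleton_iff, Sym2.eq, Sym2.rel_iff', Prod.mk.injEq,
        Prod.swap_prod_mk] at h
      rcases hadj with hG | hH
      · rcases h.1 with ⟨h1, h2⟩ | ⟨h1, h2⟩
        · subst h1; subst h2; exact Or.inl (Or.inl hG)
        · subst h1; subst h2; exact Or.inl (Or.inl hG.symm)
      · rcases h.1 with ⟨h1, h2⟩ | ⟨h1, h2⟩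
        · subst h1; subst h2; exact Or.inl (Or.inr ⟨rfl, rfl, hH⟩)
        · subst h1; subst h2; exact Or.inr (Or.inr ⟨rfl, rfl, hH⟩)

include hadj in
lemma homG {a a' : V} (h : (Gplus G gp gm).Adj a a') : (X).Adj (inl a) (inl a') :=
  (adj_inl_inl G gp gm H hp hm hadj).mpr h

include hg hh hadj in
lemma homH : ∀ w w', (Hplus H hp hm).Adj w w' →
    (X).Adj (iotaH gp gm hp hm w) (iotaH gp gm hp hm w') := by
  intro w w' h
  rcases eq_or_ne w hp with hw | hw1
  · subst w
    rcases eq_or_ne w' hp with hw' | hw'1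
    · subst w'; exact absurd rfl h.ne
    rcases eq_or_ne w' hm with hw' | hw'2
    · subst w'
      rw [iotaH_hp, iotaH_hm _ _ _ _ hh]
      exact homG G gp gm H hp hm hadj (Gplus_adj_pts G gp gm hg)
    · rw [iotaH_hp, iotaH_int _ _ _ _ hw'1 hw'2]
      exact (adj_inl_inr G gp gm H hp hm).mpr
        (Or.inl ⟨rfl, Hplus_adj_interior H hp hm h ⟨hw'1, hw'2⟩⟩)
  rcases eq_or_ne w hm with hw | hw2
  · subst w
    rcases eq_or_ne w' hp with hw' | hw'1
    · subst w'
      rw [iotaH_hm _ _ _ _ hh, iotaH_hp]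
      exact homG G gp gm H hp hm hadj (Gplus_adj_pts G gp gm hg).symm
    rcases eq_or_ne w' hm with hw' | hw'2
    · subst w'; exact absurd rfl h.ne
    · rw [iotaH_hm _ _ _ _ hh, iotaH_int _ _ _ _ hw'1 hw'2]
      exact (adj_inl_inr G gp gm H hp hm).mpr
        (Or.inr ⟨rfl, Hplus_adj_interior H hp hm h ⟨hw'1, hw'2⟩⟩)
  · rw [iotaH_int _ _ _ _ hw1 hw2]
    rcases eq_or_ne w' hp with hw' | hw'1
    · subst w'
      rw [iotaH_hp]
      exact ((adj_inl_inr G gp gm H hp hm).mpr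
        (Or.inl ⟨rfl, Hplus_adj_interior H hp hm h.symm ⟨hw1, hw2⟩⟩)).symm
    rcases eq_or_ne w' hm with hw' | hw'2
    · subst w'
      rw [iotaH_hm _ _ _ _ hh]
      exact ((adj_inl_inr G gp gm H hp hm).mpr
        (Or.inr ⟨rfl, Hplus_adj_interior H hp hm h.symm ⟨hw1, hw2⟩⟩)).symm
    · rw [iotaH_int _ _ _ _ hw'1 hw'2]
      exact (adj_inr_inr G gp gm H hp hm).mpr (Hplus_adj_interior H hp hm h ⟨hw'1, hw'2⟩)

include hg hh hadj in
lemma Dfun_step : ∀ x z y, (X).Adj x z →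
    Dfun G gp gm H hp hm x y ≤ Dfun G gp gm H hp hm z y + 1 := by
  have e1 : (Gplus G gp gm).edist gp gm = 1 :=
    edist_eq_one_iff_adj.mpr (Gplus_adj_pts G gp gm hg)
  have f1 : (Hplus H hp hm).edist hp hm = 1 :=
    edist_eq_one_iff_adj.mpr (Hplus_adj_pts H hp hm hh)
  intro x z y hxz
  match x, z with
  | inl a, inl a' =>
    have hA : (Gplus G gp gm).Adj a a' := (adj_inl_inl G gp gm H hp hm hadj).mp hxz
    match y with
    | inl a'' => exact adj_step hA a''
    | inr b => exact min_step (adj_step hA gp) (adj_step hA gm)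
  | inl a, inr b' =>
    rcases (adj_inl_inr G gp gm H hp hm).mp hxz with ⟨ha, hb'⟩ | ⟨ha, hb'⟩
    · subst a
      have hb1 : (Hplus H hp hm).edist hp b'.1 ≤ 1 :=
        (edist_eq_one_iff_adj.mpr (H_le_Hplus H hp hm hb')).le
      match y with
      | inl a'' =>
        show (Gplus G gp gm).edist gp a'' ≤ _ + 1
        simp only [Dfun]
        rw [← min_add_add_right]
        refine le_min ?_ ?_
        · rw [SimpleGraph.edist_comm]
          exact le_add_right (le_add_right le_rfl)
        · calc (Gplus G gp gm).edist gp a''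
              ≤ (Gplus G gp gm).edist gp gm + (Gplus G gp gm).edist gm a'' :=
                SimpleGraph.edist_triangle
          _ = (Gplus G gp gm).edist a'' gm + 1 := by
                rw [e1, SimpleGraph.edist_comm, add_comm]
          _ ≤ ((Gplus G gp gm).edist a'' gm + (Hplus H hp hm).edist hm b'.1) + 1 := by
                gcongr
                exact le_add_right le_rfl
      | inr b =>
        show min _ _ ≤ (Hplus H hp hm).edist b'.1 b.1 + 1
        calc min ((Gplus G gp gm).edist gp gp + (Hplus H hp hm).edist hp b.1)
              ((Gplus G gp gm).edist gp gm + (Hplus H hp hm).edist hm b.1)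
            ≤ (Gplus G gp gm).edist gp gp + (Hplus H hp hm).edist hp b.1 := min_le_left _ _
        _ = (Hplus H hp hm).edist hp b.1 := by rw [SimpleGraph.edist_self, zero_add]
        _ ≤ (Hplus H hp hm).edist hp b'.1 + (Hplus H hp hm).edist b'.1 b.1 :=
              SimpleGraph.edist_triangle
        _ ≤ 1 + (Hplus H hp hm).edist b'.1 b.1 := by gcongr
        _ = (Hplus H hp hm).edist b'.1 b.1 + 1 := add_comm _ _
    · subst a
      have hb1 : (Hplus H hp hm).edist hm b'.1 ≤ 1 :=
        (edist_eq_one_iff_adj.mpr (H_le_Hplus H hp hm hb')).le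
      match y with
      | inl a'' =>
        show (Gplus G gp gm).edist gm a'' ≤ _ + 1
        simp only [Dfun]
        rw [← min_add_add_right]
        refine le_min ?_ ?_
        · calc (Gplus G gp gm).edist gm a''
              ≤ (Gplus G gp gm).edist gm gp + (Gplus G gp gm).edist gp a'' :=
                SimpleGraph.edist_triangle
          _ = (Gplus G gp gm).edist a'' gp + 1 := by
                rw [(SimpleGraph.edist_comm : (Gplus G gp gm).edist gm gp = _), e1, SimpleGraph.edist_comm, add_comm]
          _ ≤ ((Gplus G gp gm).edist a'' gp + (Hplus H hp hm).edist hp b'.1) + 1 := by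
                gcongr
                exact le_add_right le_rfl
        · rw [SimpleGraph.edist_comm]
          exact le_add_right (le_add_right le_rfl)
      | inr b =>
        show min _ _ ≤ (Hplus H hp hm).edist b'.1 b.1 + 1
        calc min ((Gplus G gp gm).edist gm gp + (Hplus H hp hm).edist hp b.1)
              ((Gplus G gp gm).edist gm gm + (Hplus H hp hm).edist hm b.1)
            ≤ (Gplus G gp gm).edist gm gm + (Hplus H hp hm).edist hm b.1 := min_le_right _ _
        _ = (Hplus H hp hm).edist hm b.1 := by rw [SimpleGraph.edist_self, zero_add]
        _ ≤ (Hplus H hp hm).edist hm b'.1 + (Hplus H hp hm).edist b'.1 b.1 :=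
              SimpleGraph.edist_triangle
        _ ≤ 1 + (Hplus H hp hm).edist b'.1 b.1 := by gcongr
        _ = (Hplus H hp hm).edist b'.1 b.1 + 1 := add_comm _ _
  | inr b, inl a' =>
    rcases (adj_inl_inr G gp gm H hp hm).mp hxz.symm with ⟨ha, hb⟩ | ⟨ha, hb⟩
    · subst a'
      have hb1 : (Hplus H hp hm).edist hp b.1 ≤ 1 :=
        (edist_eq_one_iff_adj.mpr (H_le_Hplus H hp hm hb)).le
      match y with
      | inl a =>
        show min _ _ ≤ (Gplus G gp gm).edist gp a + 1
        calc min ((Gplus G gp gm).edist a gp + (Hplus H hp hm).edist hp b.1)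
              ((Gplus G gp gm).edist a gm + (Hplus H hp hm).edist hm b.1)
            ≤ (Gplus G gp gm).edist a gp + (Hplus H hp hm).edist hp b.1 := min_le_left _ _
        _ ≤ (Gplus G gp gm).edist a gp + 1 := by gcongr
        _ = (Gplus G gp gm).edist gp a + 1 := by rw [SimpleGraph.edist_comm]
      | inr b'' =>
        show (Hplus H hp hm).edist b.1 b''.1 ≤ _ + 1
        simp only [Dfun]
        rw [← min_add_add_right]
        refine le_min ?_ ?_
        · calc (Hplus H hp hm).edist b.1 b''.1
              ≤ (Hplus H hp hm).edist b.1 hp + (Hplus H hp hm).edist hp b''.1 :=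
                SimpleGraph.edist_triangle
          _ ≤ 1 + (Hplus H hp hm).edist hp b''.1 := by
                gcongr
                rw [SimpleGraph.edist_comm]; exact hb1
          _ = ((Gplus G gp gm).edist gp gp + (Hplus H hp hm).edist hp b''.1) + 1 := by
                rw [SimpleGraph.edist_self, zero_add, add_comm]
        · calc (Hplus H hp hm).edist b.1 b''.1
              ≤ (Hplus H hp hm).edist b.1 hp +
                  ((Hplus H hp hm).edist hp hm + (Hplus H hp hm).edist hm b''.1) := by
                calc (Hplus H hp hm).edist b.1 b''.1
                    ≤ (Hplus H hp hm).edist b.1 hm + (Hplus H hp hm).edist hm b''.1 :=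
                      SimpleGraph.edist_triangle
                _ ≤ ((Hplus H hp hm).edist b.1 hp + (Hplus H hp hm).edist hp hm) +
                      (Hplus H hp hm).edist hm b''.1 := by
                      gcongr
                      exact SimpleGraph.edist_triangle
                _ = _ := by ring
          _ ≤ 1 + (1 + (Hplus H hp hm).edist hm b''.1) := by
                gcongr
                · rw [SimpleGraph.edist_comm]; exact hb1
                · exact f1.le
          _ = ((Gplus G gp gm).edist gp gm + (Hplus H hp hm).edist hm b''.1) + 1 := by
                rw [e1]; ring
    · subst a'
      have hb1 : (Hplus H hp hm).edist hm b.1 ≤ 1 :=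
        (edist_eq_one_iff_adj.mpr (H_le_Hplus H hp hm hb)).le
      match y with
      | inl a =>
        show min _ _ ≤ (Gplus G gp gm).edist gm a + 1
        calc min ((Gplus G gp gm).edist a gp + (Hplus H hp hm).edist hp b.1)
              ((Gplus G gp gm).edist a gm + (Hplus H hp hm).edist hm b.1)
            ≤ (Gplus G gp gm).edist a gm + (Hplus H hp hm).edist hm b.1 := min_le_right _ _
        _ ≤ (Gplus G gp gm).edist a gm + 1 := by gcongr
        _ = (Gplus G gp gm).edist gm a + 1 := by rw [SimpleGraph.edist_comm]
      | inr b'' =>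
        show (Hplus H hp hm).edist b.1 b''.1 ≤ _ + 1
        simp only [Dfun]
        rw [← min_add_add_right]
        refine le_min ?_ ?_
        · calc (Hplus H hp hm).edist b.1 b''.1
              ≤ (Hplus H hp hm).edist b.1 hm +
                  ((Hplus H hp hm).edist hm hp + (Hplus H hp hm).edist hp b''.1) := by
                calc (Hplus H hp hm).edist b.1 b''.1
                    ≤ (Hplus H hp hm).edist b.1 hp + (Hplus H hp hm).edist hp b''.1 :=
                      SimpleGraph.edist_triangle
                _ ≤ ((Hplus H hp hm).edist b.1 hm + (Hplus H hp hm).edist hm hp) +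
                      (Hplus H hp hm).edist hp b''.1 := by
                      gcongr
                      exact SimpleGraph.edist_triangle
                _ = _ := by ring
          _ ≤ 1 + (1 + (Hplus H hp hm).edist hp b''.1) := by
                gcongr
                · rw [SimpleGraph.edist_comm]; exact hb1
                · rw [SimpleGraph.edist_comm]; exact f1.le
          _ = ((Gplus G gp gm).edist gm gp + (Hplus H hp hm).edist hp b''.1) + 1 := by
                rw [(SimpleGraph.edist_comm : (Gplus G gp gm).edist gm gp = _), e1]; ring
        · calc (Hplus H hp hm).edist b.1 b''.1
              ≤ (Hplus H hp hm).edist b.1 hm + (Hplus H hp hm).edist hm b''.1 :=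
                SimpleGraph.edist_triangle
          _ ≤ 1 + (Hplus H hp hm).edist hm b''.1 := by
                gcongr
                rw [SimpleGraph.edist_comm]; exact hb1
          _ = ((Gplus G gp gm).edist gm gm + (Hplus H hp hm).edist hm b''.1) + 1 := by
                rw [SimpleGraph.edist_self, zero_add, add_comm]
  | inr b, inr b' =>
    have hB : H.Adj b.1 b'.1 := (adj_inr_inr G gp gm H hp hm).mp hxz
    have hB' : (Hplus H hp hm).Adj b.1 b'.1 := H_le_Hplus H hp hm hB
    match y with
    | inl a =>
      refine min_step' ?_ ?_
      · rw [(SimpleGraph.edist_comm : (Hplus H hp hm).edist hp b.1 = _), (SimpleGraph.edist_comm : (Hplus H hp hm).edist hp b'.1 = _)]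
        exact adj_step hB' hp
      · rw [(SimpleGraph.edist_comm : (Hplus H hp hm).edist hm b.1 = _), (SimpleGraph.edist_comm : (Hplus H hp hm).edist hm b'.1 = _)]
        exact adj_step hB' hm
    | inr b'' => exact adj_step hB' b''.1

include hg hh hadj in
lemma glue_edist_le : ∀ x y, (X).edist x y ≤ Dfun G gp gm H hp hm x y := by
  have hHmap : ∀ w w', (X).edist (iotaH gp gm hp hm w) (iotaH gp gm hp hm w')
      ≤ (Hplus H hp hm).edist w w' :=
    edist_map_le _ (homH G gp gm H hp hm hg hh hadj)
  have hgpb : ∀ b : {w : W // w ≠ hp ∧ w ≠ hm},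
      (X).edist (inl gp) (inr b) ≤ (Hplus H hp hm).edist hp b.1 := by
    intro b
    have := hHmap hp b.1
    rwa [iotaH_hp, iotaH_int _ _ _ _ b.2.1 b.2.2, Subtype.coe_eta] at this
  have hgmb : ∀ b : {w : W // w ≠ hp ∧ w ≠ hm},
      (X).edist (inl gm) (inr b) ≤ (Hplus H hp hm).edist hm b.1 := by
    intro b
    have := hHmap hm b.1
    rwa [iotaH_hm _ _ _ _ hh, iotaH_int _ _ _ _ b.2.1 b.2.2, Subtype.coe_eta] at this
  have hll : ∀ a a', (X).edist (inl a) (inl a') ≤ (Gplus G gp gm).edist a a' :=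
    edist_map_le inl fun _ _ h => homG G gp gm H hp hm hadj h
  intro x y
  match x, y with
  | inl a, inl a' => exact hll a a'
  | inl a, inr b =>
    refine le_min ?_ ?_
    · calc (X).edist (inl a) (inr b)
          ≤ (X).edist (inl a) (inl gp) + (X).edist (inl gp) (inr b) :=
            SimpleGraph.edist_triangle
      _ ≤ _ := add_le_add (hll a gp) (hgpb b)
    · calc (X).edist (inl a) (inr b)
          ≤ (X).edist (inl a) (inl gm) + (X).edist (inl gm) (inr b) :=
            SimpleGraph.edist_triangle
      _ ≤ _ := add_le_add (hll a gm) (hgmb b)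
  | inr b, inl a =>
    rw [SimpleGraph.edist_comm]
    show (X).edist (inl a) (inr b) ≤ _
    refine le_min ?_ ?_
    · calc (X).edist (inl a) (inr b)
          ≤ (X).edist (inl a) (inl gp) + (X).edist (inl gp) (inr b) :=
            SimpleGraph.edist_triangle
      _ ≤ _ := add_le_add (hll a gp) (hgpb b)
    · calc (X).edist (inl a) (inr b)
          ≤ (X).edist (inl a) (inl gm) + (X).edist (inl gm) (inr b) :=
            SimpleGraph.edist_triangle
      _ ≤ _ := add_le_add (hll a gm) (hgmb b)
  | inr b, inr b' =>
    have := hHmap b.1 b'.1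
    rwa [iotaH_int _ _ _ _ b.2.1 b.2.2, iotaH_int _ _ _ _ b'.2.1 b'.2.2,
      Subtype.coe_eta, Subtype.coe_eta] at this

include hg hh hadj in
lemma glue_edist_eq : ∀ x y, (X).edist x y = Dfun G gp gm H hp hm x y := by
  intro x y
  refine le_antisymm (glue_edist_le G gp gm H hp hm hg hh hadj x y) ?_
  refine le_edist_of_lipschitz _ ?_ (Dfun_step G gp gm H hp hm hg hh hadj) x y
  intro z
  match z with
  | inl a => exact SimpleGraph.edist_self
  | inr b => exact SimpleGraph.edist_self

end Glue


/-! ### the ENat trichotomy -/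

lemma enat_tri {p m : ℕ∞} (h1 : p ≤ m + 1) (h2 : m ≤ p + 1) :
    p = m ∨ m = p + 1 ∨ p = m + 1 := by
  rcases le_total p m with h | h
  · rcases eq_or_lt_of_le h with he | hlt
    · exact Or.inl he
    · refine Or.inr (Or.inl (le_antisymm h2 ?_))
      exact (ENat.add_one_le_iff (by intro hc; rw [hc] at hlt; exact (not_top_lt hlt))).mpr hlt
  · rcases eq_or_lt_of_le h with he | hlt
    · exact Or.inl he.symm
    · refine Or.inr (Or.inr (le_antisymm h1 ?_))
      exact (ENat.add_one_le_iff (by intro hc; rw [hc] at hlt; exact (not_top_lt hlt))).mpr hlt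

/-! ### the twist coefficient -/

open scoped Classical in
noncomputable def csub {W : Type*} (H : SimpleGraph W) (hp hm : W) (b : W) : RatFunc ℚ :=
  if (Hplus H hp hm).edist hp b = (Hplus H hp hm).edist hm b then 0
  else if (Hplus H hp hm).edist hm b = (Hplus H hp hm).edist hp b + 1 then
    -qExp ((Hplus H hp hm).edist hp b)
  else qExp ((Hplus H hp hm).edist hm b)

lemma csub_spec {W : Type*} (H : SimpleGraph W) (hp hm : W) (hh : hp ≠ hm) (b : W) :
    ((Hplus H hp hm).edist hp b = (Hplus H hp hm).edist hm b ∧ csub H hp hm b = 0) ∨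
    ((Hplus H hp hm).edist hm b = (Hplus H hp hm).edist hp b + 1 ∧
      csub H hp hm b = -qExp ((Hplus H hp hm).edist hp b)) ∨
    ((Hplus H hp hm).edist hp b = (Hplus H hp hm).edist hm b + 1 ∧
      csub H hp hm b = qExp ((Hplus H hp hm).edist hm b)) := by
  classical
  set p := (Hplus H hp hm).edist hp b
  set m := (Hplus H hp hm).edist hm b
  have f1 : (Hplus H hp hm).edist hp hm = 1 :=
    SimpleGraph.edist_eq_one_iff_adj.mpr (Hplus_adj_pts H hp hm hh)
  have h1 : p ≤ m + 1 := by
    calc p ≤ (Hplus H hp hm).edist hp hm + (Hplus H hp hm).edist hm b :=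
        SimpleGraph.edist_triangle
    _ = m + 1 := by rw [f1, add_comm]
  have h2 : m ≤ p + 1 := by
    calc m ≤ (Hplus H hp hm).edist hm hp + (Hplus H hp hm).edist hp b :=
        SimpleGraph.edist_triangle
    _ = p + 1 := by rw [SimpleGraph.edist_comm, f1, add_comm]
  by_cases hpm : p = m
  · exact Or.inl ⟨hpm, by rw [csub, if_pos hpm]⟩
  rcases enat_tri h1 h2 with he | he | he
  · exact absurd he hpm
  · exact Or.inr (Or.inl ⟨he, by rw [csub, if_neg hpm, if_pos he]⟩)
  · have hne : ¬ m = p + 1 := by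
      intro hc
      have he2 : p + 0 = p + 2 := by
        calc p + 0 = p := add_zero p
        _ = m + 1 := he
        _ = (p + 1) + 1 := by rw [hc]
        _ = p + 2 := by ring
      have hptop : p = ⊤ := by
        by_contra hpt
        have h02 := WithTop.add_left_cancel hpt he2
        exact absurd ((WithTop.coe_eq_coe (a := (0:ℕ)) (b := 2)).mp h02) (by omega)
      apply hpm
      have hmt : m = ⊤ := by rw [hc, hptop, top_add]
      rw [hptop, hmt]
    exact Or.inr (Or.inr ⟨he, by rw [csub, if_neg hpm, if_neg hne]⟩)

/-! ### the correction matrix -/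

section Twist

variable {V W : Type*} [Fintype V] [DecidableEq V] [Fintype W] [DecidableEq W]
variable (G : SimpleGraph V) (gp gm : V) (H : SimpleGraph W) (hp hm : W)

local notation "I'" => (V ⊕ {w : W // w ≠ hp ∧ w ≠ hm})

noncomputable def ePf : I' → RatFunc ℚ
  | inl a => (if a = gp then 1 else 0) - (if a = gm then 1 else 0)
  | inr _ => 0

noncomputable def cf : I' → RatFunc ℚ
  | inl _ => 0
  | inr b => csub H hp hm b.1

noncomputable def Nmat : Matrix I' I' (RatFunc ℚ) :=
  Matrix.of fun x y => ePf gp gm hp hm x * cf H hp hm y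

lemma sum_ePf : ∑ x : I', ePf gp gm hp hm x = 0 := by
  classical
  rw [Fintype.sum_sum_type]
  have h2 : ∑ b : {w : W // w ≠ hp ∧ w ≠ hm}, ePf gp gm hp hm (inr b : I') = 0 := by
    simp [ePf]
  rw [h2, add_zero]
  have : ∀ a : V, ePf gp gm hp hm (inl a : I') =
      (if a = gp then (1 : RatFunc ℚ) else 0) - (if a = gm then 1 else 0) := fun a => rfl
  simp only [this, Finset.sum_sub_distrib]
  simp

lemma sum_ePf_mul (f : I' → RatFunc ℚ) :
    ∑ x : I', ePf gp gm hp hm x * f x = f (inl gp) - f (inl gm) := by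
  classical
  rw [Fintype.sum_sum_type]
  have h2 : ∑ b : {w : W // w ≠ hp ∧ w ≠ hm}, ePf gp gm hp hm (inr b : I') * f (inr b) = 0 := by
    simp [ePf]
  rw [h2, add_zero]
  have : ∀ a : V, ePf gp gm hp hm (inl a : I') * f (inl a) =
      (if a = gp then f (inl a) else 0) - (if a = gm then f (inl a) else 0) := by
    intro a
    show ((if a = gp then (1:RatFunc ℚ) else 0) - (if a = gm then 1 else 0)) * f (inl a) = _
    split_ifs <;> ring
  simp only [this, Finset.sum_sub_distrib]
  rw [Finset.sum_ite_eq' Finset.univ gp (fun a => f (inl a)),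
    Finset.sum_ite_eq' Finset.univ gm (fun a => f (inl a))]
  simp

lemma entry_mul_N (A : Matrix I' I' (RatFunc ℚ)) (x y : I') :
    (A * Nmat gp gm H hp hm) x y = (A x (inl gp) - A x (inl gm)) * cf H hp hm y := by
  classical
  rw [Matrix.mul_apply]
  have : ∀ t : I', A x t * Nmat gp gm H hp hm t y =
      ePf gp gm hp hm t * (A x t * cf H hp hm y) := by
    intro t
    show A x t * (ePf gp gm hp hm t * cf H hp hm y) = _
    ring
  simp only [this]
  rw [sum_ePf_mul gp gm hp hm (fun t => A x t * cf H hp hm y)]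
  ring

lemma entry_NT_mul (A : Matrix I' I' (RatFunc ℚ)) (x y : I') :
    ((Nmat gp gm H hp hm).transpose * A) x y =
      cf H hp hm x * (A (inl gp) y - A (inl gm) y) := by
  classical
  rw [Matrix.mul_apply]
  have : ∀ t : I', (Nmat gp gm H hp hm).transpose x t * A t y =
      ePf gp gm hp hm t * (cf H hp hm x * A t y) := by
    intro t
    show (ePf gp gm hp hm t * cf H hp hm x) * A t y = _
    ring
  simp only [this]
  rw [sum_ePf_mul gp gm hp hm (fun t => cf H hp hm x * A t y)]
  ring

lemma Nmat_sq : Nmat gp gm H hp hm * Nmat gp gm H hp hm = 0 := by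
  classical
  ext x y
  rw [Matrix.mul_apply]
  have : ∀ t : I', Nmat gp gm H hp hm x t * Nmat gp gm H hp hm t y = 0 := by
    intro t
    show (ePf gp gm hp hm x * cf H hp hm t) * (ePf gp gm hp hm t * cf H hp hm y) = 0
    match t with
    | inl a => show (_ * (0:RatFunc ℚ)) * _ = 0; ring
    | inr b => show _ * ((0:RatFunc ℚ) * _) = 0; ring
  simp [this]

lemma sum_sum_N_mul (A : Matrix I' I' (RatFunc ℚ)) :
    ∑ x : I', ∑ y : I', (Nmat gp gm H hp hm * A) x y = 0 := by
  classical
  have h : ∀ x y : I', (Nmat gp gm H hp hm * A) x y =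
      ePf gp gm hp hm x * (∑ t, cf H hp hm t * A t y) := by
    intro x y
    rw [Matrix.mul_apply, Finset.mul_sum]
    congr 1
    ext t
    show (ePf gp gm hp hm x * cf H hp hm t) * A t y = _
    ring
  simp only [h]
  rw [Finset.sum_comm]
  have h0 : ∀ y : I', ∑ x : I', ePf gp gm hp hm x * (∑ t, cf H hp hm t * A t y) = 0 := by
    intro y
    rw [← Finset.sum_mul, sum_ePf, zero_mul]
  exact Finset.sum_eq_zero fun y _ => h0 y

lemma sum_sum_mul_NT (A : Matrix I' I' (RatFunc ℚ)) :
    ∑ x : I', ∑ y : I', (A * (Nmat gp gm H hp hm).transpose) x y = 0 := by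
  classical
  have h : ∀ x y : I', (A * (Nmat gp gm H hp hm).transpose) x y =
      ePf gp gm hp hm y * (∑ t, A x t * cf H hp hm t) := by
    intro x y
    rw [Matrix.mul_apply, Finset.mul_sum]
    congr 1
    ext t
    show A x t * (ePf gp gm hp hm y * cf H hp hm t) = _
    ring
  simp only [h]
  have h0 : ∀ x : I', ∑ y : I', ePf gp gm hp hm y * (∑ t, A x t * cf H hp hm t) = 0 := by
    intro x
    rw [← Finset.sum_mul, sum_ePf, zero_mul]
  exact Finset.sum_eq_zero fun x _ => h0 x

end Twist


/-! ### the relabelling equivalence -/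

def twEq (V : Type*) {W : Type*} (hp hm : W) :
    (V ⊕ {w : W // w ≠ hp ∧ w ≠ hm}) ≃ (V ⊕ {w : W // w ≠ hm ∧ w ≠ hp}) :=
  Equiv.sumCongr (Equiv.refl V) (Equiv.subtypeEquiv (Equiv.refl W) fun _ => and_comm)

lemma twEq_inl {V W : Type*} (hp hm : W) (a : V) :
    twEq V hp hm (inl a) = inl a := rfl

lemma twEq_inr {V W : Type*} (hp hm : W) (b : {w : W // w ≠ hp ∧ w ≠ hm}) :
    twEq V hp hm (inr b) = inr ⟨b.1, b.2.2, b.2.1⟩ := rfl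

lemma Hplus_swap {W : Type*} (H : SimpleGraph W) (hp hm : W) :
    Hplus H hm hp = Hplus H hp hm := by
  unfold Hplus
  rw [Sym2.eq_swap]

end WhitneyAux



open SimpleGraph Sum WhitneyAux Matrix

/-- Magnitude is invariant under Whitney twists when the gluing points are adjacent:
`X = twoPointGlue G g₊ g₋ H h₊ h₋` and `Y = twoPointGlue G g₊ g₋ H h₋ h₊` differ by a
Whitney twist, and if the gluing points are adjacent (in `G` or in `H`) then
`|X| = |Y|`. -/
theorem magnitude_whitneyTwist
    {V W : Type*} [Fintype V] [DecidableEq V] [Fintype W] [DecidableEq W]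
    (G : SimpleGraph V) (gp gm : V) (H : SimpleGraph W) (hp hm : W)
    (hg : gp ≠ gm) (hh : hp ≠ hm)
    (hadj : G.Adj gp gm ∨ H.Adj hp hm) :
    magnitude (twoPointGlue G gp gm H hp hm) =
      magnitude (twoPointGlue G gp gm H hm hp) := by
  classical
  have hadj' : G.Adj gp gm ∨ H.Adj hm hp := hadj.imp id SimpleGraph.Adj.symm
  have hHswap : Hplus H hm hp = Hplus H hp hm := Hplus_swap H hp hm
  have DX := glue_edist_eq G gp gm H hp hm hg hh hadj
  have DY := glue_edist_eq G gp gm H hm hp hg hh.symm hadj'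
  have e1 : (Gplus G gp gm).edist gp gm = 1 :=
    edist_eq_one_iff_adj.mpr (Gplus_adj_pts G gp gm hg)
  have f1 : (Hplus H hp hm).edist hp hm = 1 :=
    edist_eq_one_iff_adj.mpr (Hplus_adj_pts H hp hm hh)
  have hu : ∀ a : V, (Gplus G gp gm).edist a gp ≤ (Gplus G gp gm).edist a gm + 1 := by
    intro a
    calc (Gplus G gp gm).edist a gp
        ≤ (Gplus G gp gm).edist a gm + (Gplus G gp gm).edist gm gp :=
          SimpleGraph.edist_triangle
    _ = (Gplus G gp gm).edist a gm + 1 := by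
        rw [(SimpleGraph.edist_comm : (Gplus G gp gm).edist gm gp = _), e1]
  have hv : ∀ a : V, (Gplus G gp gm).edist a gm ≤ (Gplus G gp gm).edist a gp + 1 := by
    intro a
    calc (Gplus G gp gm).edist a gm
        ≤ (Gplus G gp gm).edist a gp + (Gplus G gp gm).edist gp gm :=
          SimpleGraph.edist_triangle
    _ = (Gplus G gp gm).edist a gp + 1 := by rw [e1]
  have hP : ∀ b : W, (Hplus H hp hm).edist hp b ≤ (Hplus H hp hm).edist hm b + 1 := by
    intro b
    calc (Hplus H hp hm).edist hp b
        ≤ (Hplus H hp hm).edist hp hm + (Hplus H hp hm).edist hm b :=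
          SimpleGraph.edist_triangle
    _ = (Hplus H hp hm).edist hm b + 1 := by rw [f1, add_comm]
  have hM : ∀ b : W, (Hplus H hp hm).edist hm b ≤ (Hplus H hp hm).edist hp b + 1 := by
    intro b
    calc (Hplus H hp hm).edist hm b
        ≤ (Hplus H hp hm).edist hm hp + (Hplus H hp hm).edist hp b :=
          SimpleGraph.edist_triangle
    _ = (Hplus H hp hm).edist hp b + 1 := by
        rw [(SimpleGraph.edist_comm : (Hplus H hp hm).edist hm hp = _), f1, add_comm]
  -- entries of the matrix of X
  have ZXll : ∀ a a' : V, magMatrix (twoPointGlue G gp gm H hp hm) (inl a) (inl a')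
      = qExp ((Gplus G gp gm).edist a a') := by
    intro a a'
    show qExp ((twoPointGlue G gp gm H hp hm).edist (inl a) (inl a')) = _
    rw [DX]
    rfl
  have ZXlr : ∀ (a : V) (b : {w : W // w ≠ hp ∧ w ≠ hm}),
      magMatrix (twoPointGlue G gp gm H hp hm) (inl a) (inr b) =
        qExp (min ((Gplus G gp gm).edist a gp + (Hplus H hp hm).edist hp b.1)
          ((Gplus G gp gm).edist a gm + (Hplus H hp hm).edist hm b.1)) := by
    intro a b
    show qExp ((twoPointGlue G gp gm H hp hm).edist (inl a) (inr b)) = _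
    rw [DX]
    rfl
  have ZXrl : ∀ (b : {w : W // w ≠ hp ∧ w ≠ hm}) (a : V),
      magMatrix (twoPointGlue G gp gm H hp hm) (inr b) (inl a) =
        qExp (min ((Gplus G gp gm).edist a gp + (Hplus H hp hm).edist hp b.1)
          ((Gplus G gp gm).edist a gm + (Hplus H hp hm).edist hm b.1)) := by
    intro b a
    show qExp ((twoPointGlue G gp gm H hp hm).edist (inr b) (inl a)) = _
    rw [DX]
    rfl
  have ZXrr : ∀ b b' : {w : W // w ≠ hp ∧ w ≠ hm},
      magMatrix (twoPointGlue G gp gm H hp hm) (inr b) (inr b')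
        = qExp ((Hplus H hp hm).edist b.1 b'.1) := by
    intro b b'
    show qExp ((twoPointGlue G gp gm H hp hm).edist (inr b) (inr b')) = _
    rw [DX]
    rfl
  -- simplified gluing-point entries
  have minP : ∀ b : {w : W // w ≠ hp ∧ w ≠ hm},
      min ((Gplus G gp gm).edist gp gp + (Hplus H hp hm).edist hp b.1)
          ((Gplus G gp gm).edist gp gm + (Hplus H hp hm).edist hm b.1)
        = (Hplus H hp hm).edist hp b.1 := by
    intro b
    rw [SimpleGraph.edist_self, zero_add, e1]
    refine min_eq_left ?_
    calc (Hplus H hp hm).edist hp b.1 ≤ (Hplus H hp hm).edist hm b.1 + 1 := hP b.1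
    _ = 1 + (Hplus H hp hm).edist hm b.1 := add_comm _ _
  have minM : ∀ b : {w : W // w ≠ hp ∧ w ≠ hm},
      min ((Gplus G gp gm).edist gm gp + (Hplus H hp hm).edist hp b.1)
          ((Gplus G gp gm).edist gm gm + (Hplus H hp hm).edist hm b.1)
        = (Hplus H hp hm).edist hm b.1 := by
    intro b
    rw [SimpleGraph.edist_self, zero_add,
      (SimpleGraph.edist_comm : (Gplus G gp gm).edist gm gp = _), e1]
    refine min_eq_right ?_
    calc (Hplus H hp hm).edist hm b.1 ≤ (Hplus H hp hm).edist hp b.1 + 1 := hM b.1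
    _ = 1 + (Hplus H hp hm).edist hp b.1 := add_comm _ _
  -- entries of the matrix of Y, transported along the relabelling
  have ZYll : ∀ a a' : V,
      magMatrix (twoPointGlue G gp gm H hm hp) (twEq V hp hm (inl a)) (twEq V hp hm (inl a'))
        = qExp ((Gplus G gp gm).edist a a') := by
    intro a a'
    show qExp ((twoPointGlue G gp gm H hm hp).edist (inl a) (inl a')) = _
    rw [DY]
    rfl
  have ZYlr : ∀ (a : V) (b : {w : W // w ≠ hp ∧ w ≠ hm}),
      magMatrix (twoPointGlue G gp gm H hm hp) (twEq V hp hm (inl a)) (twEq V hp hm (inr b)) =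
        qExp (min ((Gplus G gp gm).edist a gp + (Hplus H hp hm).edist hm b.1)
          ((Gplus G gp gm).edist a gm + (Hplus H hp hm).edist hp b.1)) := by
    intro a b
    show qExp ((twoPointGlue G gp gm H hm hp).edist (inl a) (inr ⟨b.1, b.2.2, b.2.1⟩)) = _
    rw [DY]
    show qExp (min ((Gplus G gp gm).edist a gp + (Hplus H hm hp).edist hm b.1)
      ((Gplus G gp gm).edist a gm + (Hplus H hm hp).edist hp b.1)) = _
    rw [hHswap]
  have ZYrl : ∀ (b : {w : W // w ≠ hp ∧ w ≠ hm}) (a : V),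
      magMatrix (twoPointGlue G gp gm H hm hp) (twEq V hp hm (inr b)) (twEq V hp hm (inl a)) =
        qExp (min ((Gplus G gp gm).edist a gp + (Hplus H hp hm).edist hm b.1)
          ((Gplus G gp gm).edist a gm + (Hplus H hp hm).edist hp b.1)) := by
    intro b a
    show qExp ((twoPointGlue G gp gm H hm hp).edist (inr ⟨b.1, b.2.2, b.2.1⟩) (inl a)) = _
    rw [DY]
    show qExp (min ((Gplus G gp gm).edist a gp + (Hplus H hm hp).edist hm b.1)
      ((Gplus G gp gm).edist a gm + (Hplus H hm hp).edist hp b.1)) = _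
    rw [hHswap]
  have ZYrr : ∀ b b' : {w : W // w ≠ hp ∧ w ≠ hm},
      magMatrix (twoPointGlue G gp gm H hm hp) (twEq V hp hm (inr b)) (twEq V hp hm (inr b'))
        = qExp ((Hplus H hp hm).edist b.1 b'.1) := by
    intro b b'
    show qExp ((twoPointGlue G gp gm H hm hp).edist (inr ⟨b.1, b.2.2, b.2.1⟩)
      (inr ⟨b'.1, b'.2.2, b'.2.1⟩)) = _
    rw [DY]
    show qExp ((Hplus H hm hp).edist b.1 b'.1) = _
    rw [hHswap]
  -- the delta identity
  have hdelta : ∀ b : W, qExp ((Hplus H hp hm).edist hp b) - qExp ((Hplus H hp hm).edist hm b)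
      = csub H hp hm b * (RatFunc.X - 1) := by
    intro b
    rcases csub_spec H hp hm hh b with ⟨h1, h2⟩ | ⟨h1, h2⟩ | ⟨h1, h2⟩
    · rw [h1, h2]; ring
    · rw [h2, h1, qExp_add_one]; ring
    · rw [h2, h1, qExp_add_one]; ring
  -- the cross identity
  have hcross : ∀ (a : V) (b : {w : W // w ≠ hp ∧ w ≠ hm}),
      qExp (min ((Gplus G gp gm).edist a gp + (Hplus H hp hm).edist hm b.1)
          ((Gplus G gp gm).edist a gm + (Hplus H hp hm).edist hp b.1))
        = qExp (min ((Gplus G gp gm).edist a gp + (Hplus H hp hm).edist hp b.1)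
            ((Gplus G gp gm).edist a gm + (Hplus H hp hm).edist hm b.1))
          + (qExp ((Gplus G gp gm).edist a gp) - qExp ((Gplus G gp gm).edist a gm))
            * csub H hp hm b.1 := by
    intro a b
    rcases csub_spec H hp hm hh b.1 with ⟨h1, h2⟩ | ⟨h1, h2⟩ | ⟨h1, h2⟩
    · rw [h1, h2]; ring
    · have m1 : min ((Gplus G gp gm).edist a gp + (Hplus H hp hm).edist hm b.1)
          ((Gplus G gp gm).edist a gm + (Hplus H hp hm).edist hp b.1)
          = (Gplus G gp gm).edist a gm + (Hplus H hp hm).edist hp b.1 := by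
        refine min_eq_right ?_
        calc (Gplus G gp gm).edist a gm + (Hplus H hp hm).edist hp b.1
            ≤ ((Gplus G gp gm).edist a gp + 1) + (Hplus H hp hm).edist hp b.1 := by
              gcongr
              exact hv a
        _ = (Gplus G gp gm).edist a gp + ((Hplus H hp hm).edist hp b.1 + 1) := by ring
        _ = (Gplus G gp gm).edist a gp + (Hplus H hp hm).edist hm b.1 := by rw [← h1]
      have m2 : min ((Gplus G gp gm).edist a gp + (Hplus H hp hm).edist hp b.1)
          ((Gplus G gp gm).edist a gm + (Hplus H hp hm).edist hm b.1)
          = (Gplus G gp gm).edist a gp + (Hplus H hp hm).edist hp b.1 := by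
        refine min_eq_left ?_
        calc (Gplus G gp gm).edist a gp + (Hplus H hp hm).edist hp b.1
            ≤ ((Gplus G gp gm).edist a gm + 1) + (Hplus H hp hm).edist hp b.1 := by
              gcongr
              exact hu a
        _ = (Gplus G gp gm).edist a gm + ((Hplus H hp hm).edist hp b.1 + 1) := by ring
        _ = (Gplus G gp gm).edist a gm + (Hplus H hp hm).edist hm b.1 := by rw [← h1]
      rw [m1, m2, h2, qExp_add, qExp_add]
      ring
    · have m1 : min ((Gplus G gp gm).edist a gp + (Hplus H hp hm).edist hm b.1)
          ((Gplus G gp gm).edist a gm + (Hplus H hp hm).edist hp b.1)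
          = (Gplus G gp gm).edist a gp + (Hplus H hp hm).edist hm b.1 := by
        refine min_eq_left ?_
        calc (Gplus G gp gm).edist a gp + (Hplus H hp hm).edist hm b.1
            ≤ ((Gplus G gp gm).edist a gm + 1) + (Hplus H hp hm).edist hm b.1 := by
              gcongr
              exact hu a
        _ = (Gplus G gp gm).edist a gm + ((Hplus H hp hm).edist hm b.1 + 1) := by ring
        _ = (Gplus G gp gm).edist a gm + (Hplus H hp hm).edist hp b.1 := by rw [← h1]
      have m2 : min ((Gplus G gp gm).edist a gp + (Hplus H hp hm).edist hp b.1)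
          ((Gplus G gp gm).edist a gm + (Hplus H hp hm).edist hm b.1)
          = (Gplus G gp gm).edist a gm + (Hplus H hp hm).edist hm b.1 := by
        refine min_eq_right ?_
        calc (Gplus G gp gm).edist a gm + (Hplus H hp hm).edist hm b.1
            ≤ ((Gplus G gp gm).edist a gp + 1) + (Hplus H hp hm).edist hm b.1 := by
              gcongr
              exact hv a
        _ = (Gplus G gp gm).edist a gp + ((Hplus H hp hm).edist hm b.1 + 1) := by ring
        _ = (Gplus G gp gm).edist a gp + (Hplus H hp hm).edist hp b.1 := by rw [← h1]
      rw [m1, m2, h2, qExp_add, qExp_add]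
      ring
  -- the entrywise identity
  have hEntry : ∀ x y, ((magMatrix (twoPointGlue G gp gm H hm hp)).submatrix
        (twEq V hp hm) (twEq V hp hm)) x y
      = magMatrix (twoPointGlue G gp gm H hp hm) x y
        + cf H hp hm x * (magMatrix (twoPointGlue G gp gm H hp hm) (inl gp) y
            - magMatrix (twoPointGlue G gp gm H hp hm) (inl gm) y)
        + ((magMatrix (twoPointGlue G gp gm H hp hm) x (inl gp)
              + cf H hp hm x * (magMatrix (twoPointGlue G gp gm H hp hm) (inl gp) (inl gp)
                - magMatrix (twoPointGlue G gp gm H hp hm) (inl gm) (inl gp)))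
            - (magMatrix (twoPointGlue G gp gm H hp hm) x (inl gm)
              + cf H hp hm x * (magMatrix (twoPointGlue G gp gm H hp hm) (inl gp) (inl gm)
                - magMatrix (twoPointGlue G gp gm H hp hm) (inl gm) (inl gm))))
          * cf H hp hm y := by
    have hgg : magMatrix (twoPointGlue G gp gm H hp hm) (inl gp) (inl gp) = 1 := by
      rw [ZXll, SimpleGraph.edist_self, qExp_zero]
    have hmm' : magMatrix (twoPointGlue G gp gm H hp hm) (inl gm) (inl gm) = 1 := by
      rw [ZXll, SimpleGraph.edist_self, qExp_zero]
    have hgm' : magMatrix (twoPointGlue G gp gm H hp hm) (inl gp) (inl gm) = RatFunc.X := by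
      rw [ZXll, e1, qExp_one]
    have hmg' : magMatrix (twoPointGlue G gp gm H hp hm) (inl gm) (inl gp) = RatFunc.X := by
      rw [ZXll, (SimpleGraph.edist_comm : (Gplus G gp gm).edist gm gp = _), e1, qExp_one]
    intro x y
    show magMatrix (twoPointGlue G gp gm H hm hp) (twEq V hp hm x) (twEq V hp hm y) = _
    match x, y with
    | inl a, inl a' =>
      rw [ZYll, ZXll]
      show _ = _ + (0:RatFunc ℚ) * _ + (_ + (0:RatFunc ℚ) * _ - (_ + (0:RatFunc ℚ) * _))
        * (0:RatFunc ℚ)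
      ring
    | inl a, inr b =>
      rw [ZYlr, ZXlr, hcross a b, ZXll a gp, ZXll a gm]
      show _ + (qExp ((Gplus G gp gm).edist a gp) - qExp ((Gplus G gp gm).edist a gm))
          * csub H hp hm b.1
        = _ + (0:RatFunc ℚ) * _
          + ((qExp ((Gplus G gp gm).edist a gp) + (0:RatFunc ℚ) * _)
              - (qExp ((Gplus G gp gm).edist a gm) + (0:RatFunc ℚ) * _)) * csub H hp hm b.1
      ring
    | inr b, inl a =>
      rw [ZYrl, ZXrl, hcross a b]
      have h1 : magMatrix (twoPointGlue G gp gm H hp hm) (inl gp) (inl a)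
          = qExp ((Gplus G gp gm).edist a gp) := by
        rw [ZXll, (SimpleGraph.edist_comm : (Gplus G gp gm).edist gp a = _)]
      have h2 : magMatrix (twoPointGlue G gp gm H hp hm) (inl gm) (inl a)
          = qExp ((Gplus G gp gm).edist a gm) := by
        rw [ZXll, (SimpleGraph.edist_comm : (Gplus G gp gm).edist gm a = _)]
      have h3 : magMatrix (twoPointGlue G gp gm H hp hm) (inr b) (inl gp)
          = qExp ((Hplus H hp hm).edist hp b.1) := by rw [ZXrl, minP]
      have h4 : magMatrix (twoPointGlue G gp gm H hp hm) (inr b) (inl gm)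
          = qExp ((Hplus H hp hm).edist hm b.1) := by rw [ZXrl, minM]
      rw [h1, h2, h3, h4, hgg, hmm', hgm', hmg']
      show _ + (qExp ((Gplus G gp gm).edist a gp) - qExp ((Gplus G gp gm).edist a gm))
          * csub H hp hm b.1
        = _ + csub H hp hm b.1 * _
          + ((_ + csub H hp hm b.1 * _) - (_ + csub H hp hm b.1 * _)) * (0:RatFunc ℚ)
      ring
    | inr b, inr b' =>
      rw [ZYrr, ZXrr]
      have h1 : magMatrix (twoPointGlue G gp gm H hp hm) (inl gp) (inr b')
          = qExp ((Hplus H hp hm).edist hp b'.1) := by rw [ZXlr, minP]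
      have h2 : magMatrix (twoPointGlue G gp gm H hp hm) (inl gm) (inr b')
          = qExp ((Hplus H hp hm).edist hm b'.1) := by rw [ZXlr, minM]
      have h3 : magMatrix (twoPointGlue G gp gm H hp hm) (inr b) (inl gp)
          = qExp ((Hplus H hp hm).edist hp b.1) := by rw [ZXrl, minP]
      have h4 : magMatrix (twoPointGlue G gp gm H hp hm) (inr b) (inl gm)
          = qExp ((Hplus H hp hm).edist hm b.1) := by rw [ZXrl, minM]
      rw [h1, h2, h3, h4, hgg, hmm', hgm', hmg']
      show _ = _ + csub H hp hm b.1 * _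
        + ((_ + csub H hp hm b.1 * _) - (_ + csub H hp hm b.1 * _)) * csub H hp hm b'.1
      have hd := hdelta b.1
      have hd' := hdelta b'.1
      linear_combination (-(csub H hp hm b.1)) * hd' + (-(csub H hp hm b'.1)) * hd
  -- the matrix identity
  have hZY' : (magMatrix (twoPointGlue G gp gm H hm hp)).submatrix (twEq V hp hm) (twEq V hp hm)
      = (1 + (Nmat gp gm H hp hm)ᵀ) * magMatrix (twoPointGlue G gp gm H hp hm)
          * (1 + Nmat gp gm H hp hm) := by
    ext x y
    rw [hEntry x y]
    rw [Matrix.add_mul, Matrix.one_mul, Matrix.mul_add, Matrix.mul_one]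
    rw [Matrix.add_apply, Matrix.add_apply]
    rw [entry_NT_mul gp gm H hp hm (magMatrix (twoPointGlue G gp gm H hp hm)) x y,
      entry_mul_N gp gm H hp hm
        (magMatrix (twoPointGlue G gp gm H hp hm)
          + (Nmat gp gm H hp hm)ᵀ * magMatrix (twoPointGlue G gp gm H hp hm)) x y]
    rw [Matrix.add_apply, Matrix.add_apply,
      entry_NT_mul gp gm H hp hm (magMatrix (twoPointGlue G gp gm H hp hm)) x (inl gp),
      entry_NT_mul gp gm H hp hm (magMatrix (twoPointGlue G gp gm H hp hm)) x (inl gm)]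
    try ring
  -- invertibility bookkeeping
  have hNN : Nmat gp gm H hp hm * Nmat gp gm H hp hm = 0 := Nmat_sq gp gm H hp hm
  have hPinv : (1 + Nmat gp gm H hp hm) * (1 - Nmat gp gm H hp hm) = 1 := by
    rw [add_mul, one_mul, mul_sub, mul_one, hNN, sub_zero, sub_add_cancel]
  have hPinv2 : (1 - Nmat gp gm H hp hm) * (1 + Nmat gp gm H hp hm) = 1 := by
    rw [sub_mul, one_mul, mul_add, mul_one, hNN, add_zero, add_sub_cancel_right]
  have hTa : (1 + (Nmat gp gm H hp hm)ᵀ) * (1 - (Nmat gp gm H hp hm)ᵀ) = 1 := by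
    have h := congrArg Matrix.transpose hPinv2
    rwa [Matrix.transpose_mul, Matrix.transpose_sub, Matrix.transpose_add,
      Matrix.transpose_one] at h
  have hright : (magMatrix (twoPointGlue G gp gm H hm hp)).submatrix (twEq V hp hm) (twEq V hp hm)
      * ((1 - Nmat gp gm H hp hm) * (magMatrix (twoPointGlue G gp gm H hp hm))⁻¹
          * (1 - (Nmat gp gm H hp hm)ᵀ)) = 1 := by
    rw [hZY']
    simp only [Matrix.mul_assoc]
    rw [← Matrix.mul_assoc (1 + Nmat gp gm H hp hm) (1 - Nmat gp gm H hp hm), hPinv,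
      Matrix.one_mul]
    rw [← Matrix.mul_assoc (magMatrix (twoPointGlue G gp gm H hp hm))
      (magMatrix (twoPointGlue G gp gm H hp hm))⁻¹, magMatrix_mul_inv, Matrix.one_mul]
    exact hTa
  have hsub : (magMatrix (twoPointGlue G gp gm H hm hp)).submatrix (twEq V hp hm) (twEq V hp hm)
      * ((magMatrix (twoPointGlue G gp gm H hm hp))⁻¹.submatrix (twEq V hp hm) (twEq V hp hm))
      = 1 := by
    rw [Matrix.submatrix_mul_equiv, magMatrix_mul_inv, Matrix.submatrix_one_equiv]
  have hQeq : (magMatrix (twoPointGlue G gp gm H hm hp))⁻¹.submatrix (twEq V hp hm) (twEq V hp hm)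
      = (1 - Nmat gp gm H hp hm) * (magMatrix (twoPointGlue G gp gm H hp hm))⁻¹
          * (1 - (Nmat gp gm H hp hm)ᵀ) :=
    (Matrix.inv_eq_right_inv hsub).symm.trans (Matrix.inv_eq_right_inv hright)
  -- final sum computation
  have hmagY : magnitude (twoPointGlue G gp gm H hm hp)
      = ∑ x, ∑ y, ((1 - Nmat gp gm H hp hm) * (magMatrix (twoPointGlue G gp gm H hp hm))⁻¹
          * (1 - (Nmat gp gm H hp hm)ᵀ)) x y := by
    rw [magnitude]
    rw [← Equiv.sum_comp (twEq V hp hm)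
      (fun x => ∑ y, (magMatrix (twoPointGlue G gp gm H hm hp))⁻¹ x y)]
    refine Finset.sum_congr rfl fun x _ => ?_
    rw [← Equiv.sum_comp (twEq V hp hm)
      (fun y => (magMatrix (twoPointGlue G gp gm H hm hp))⁻¹ (twEq V hp hm x) y)]
    refine Finset.sum_congr rfl fun y _ => ?_
    rw [← hQeq]
    rfl
  rw [hmagY]
  have hexp : (1 - Nmat gp gm H hp hm) * (magMatrix (twoPointGlue G gp gm H hp hm))⁻¹
      * (1 - (Nmat gp gm H hp hm)ᵀ)
      = ((magMatrix (twoPointGlue G gp gm H hp hm))⁻¹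
          - Nmat gp gm H hp hm * (magMatrix (twoPointGlue G gp gm H hp hm))⁻¹)
        - ((magMatrix (twoPointGlue G gp gm H hp hm))⁻¹
          - Nmat gp gm H hp hm * (magMatrix (twoPointGlue G gp gm H hp hm))⁻¹)
            * (Nmat gp gm H hp hm)ᵀ := by
    rw [sub_mul, one_mul, mul_sub, mul_one]
  rw [hexp]
  have hsum1 : ∀ (A B : Matrix (V ⊕ {w : W // w ≠ hp ∧ w ≠ hm})
      (V ⊕ {w : W // w ≠ hp ∧ w ≠ hm}) (RatFunc ℚ)),
      ∑ x, ∑ y, (A - B) x y = (∑ x, ∑ y, A x y) - ∑ x, ∑ y, B x y := by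
    intro A B
    simp [Matrix.sub_apply, Finset.sum_sub_distrib]
  rw [hsum1, hsum1, sum_sum_mul_NT gp gm H hp hm, sum_sum_N_mul gp gm H hp hm,
    sub_zero, sub_zero]
  rfl
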